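/- arXiv:0906.2094 — 3 statements merged into one kernel-verified Lean document; each statement's English description precedes it below -/
import Mathlib

section
/- If x(t) ∈ Δ(S) evolves via the logistic law x_α(t) = exp(U_α(t))/∑_β exp(U_β(t)) where dU_α/dt = u_α(x(t)) for a continuous payoff function u : Δ(S) → ℝ^S, then x(t) solves the replicator equation dx_α/dt = x_α(t)(u_α(x(t)) - ∑_β x_β(t) u_β(x(t))). -/
/-- If `x(t)` is the softmax of scores `U(t)` whose coordinates satisfy
`dU_α/dt = u_α(x(t))` for a continuous payoff `u`, then `x(t)` solves the replicator
equation `dx_α/dt = x_α (u_α(x) - ∑_β x_β u_β(x))`. -/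
theorem softmax_of_scores_solves_replicator {S : Type*} [Fintype S]
    (u : (S → ℝ) → S → ℝ) (hu : Continuous u)
    (U : ℝ → S → ℝ) (x : ℝ → S → ℝ)
    (hx : ∀ t α, x t α = Real.exp (U t α) / ∑ β, Real.exp (U t β))
    (hU : ∀ t α, HasDerivAt (fun s => U s α) (u (x t) α) t)
    (t : ℝ) (α : S) :
    HasDerivAt (fun s => x s α)
      (x t α * (u (x t) α - ∑ β, x t β * u (x t) β)) t := by
  have hSpos : (0:ℝ) < ∑ β, Real.exp (U t β) := by
    cases isEmpty_or_nonempty S with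
    | inl h =>
      exfalso; exact IsEmpty.false α
    | inr h =>
      exact Finset.sum_pos (fun β _ => Real.exp_pos _) Finset.univ_nonempty
  have hSne : (∑ β, Real.exp (U t β)) ≠ 0 := ne_of_gt hSpos
  have hf : ∀ β, HasDerivAt (fun s => Real.exp (U s β))
      (Real.exp (U t β) * u (x t) β) t := fun β => (hU t β).exp
  have hg : HasDerivAt (fun s => ∑ β, Real.exp (U s β))
      (∑ β, Real.exp (U t β) * u (x t) β) t := by
    exact HasDerivAt.fun_sum (fun β _ => hf β)
  have hdiv := (hf α).fun_div hg hSne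
  have hxeq : (fun s => x s α) = fun s => Real.exp (U s α) / ∑ β, Real.exp (U s β) := by
    funext s; exact hx s α
  rw [hxeq]
  refine hdiv.congr_deriv (Eq.symm ?_)
  have hxβ : ∀ β, x t β = Real.exp (U t β) / ∑ γ, Real.exp (U t γ) := fun β => hx t β
  simp only [hxβ]
  rw [Finset.sum_congr rfl (fun β _ => div_mul_eq_mul_div _ _ _), ← Finset.sum_div]
  field_simp
end

section
/- If a finite game is solvable by iterated elimination of strictly dominated strategies (the set of rationally admissible strategy profiles is a single pure profile), then that profile is the unique strict Nash equilibrium of the game. -/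
/-- Multilinear (mixed) payoff of player `i` at the mixed profile `p`, where
`U i a` is `i`'s payoff at the pure profile `a`. -/
noncomputable def mixedPayoff {N : Type*} [Fintype N] [DecidableEq N] {S : N → Type*}
    [∀ i, Fintype (S i)] (U : (i : N) → ((j : N) → S j) → ℝ)
    (i : N) (p : (j : N) → S j → ℝ) : ℝ :=
  ∑ a : (j : N) → S j, (∏ j, p j (a j)) * U i a

/-- The pure strategy `α ∈ S i` of player `i` is strictly dominated, relative to the
surviving strategy sets `T`, by some mixed strategy supported on `T i`. -/
def dominatedIn {N : Type*} [Fintype N] [DecidableEq N] {S : N → Type*}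
    [∀ i, Fintype (S i)] [∀ i, DecidableEq (S i)]
    (U : (i : N) → ((j : N) → S j) → ℝ) (T : (j : N) → Finset (S j))
    (i : N) (α : S i) : Prop :=
  ∃ q : S i → ℝ, (∀ β, 0 ≤ q β) ∧ (∑ β, q β = 1) ∧ (∀ β, q β ≠ 0 → β ∈ T i) ∧
    ∀ a : (j : N) → S j, (∀ j, a j ∈ T j) →
      U i (Function.update a i α) < ∑ β, q β * U i (Function.update a i β)

open Classical in
/-- One round of elimination: remove from every surviving set all strategies that are
strictly dominated with respect to the current surviving sets. -/
noncomputable def elimStep {N : Type*} [Fintype N] [DecidableEq N] {S : N → Type*}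
    [∀ i, Fintype (S i)] [∀ i, DecidableEq (S i)]
    (U : (i : N) → ((j : N) → S j) → ℝ) (T : (j : N) → Finset (S j)) :
    (j : N) → Finset (S j) :=
  fun i => (T i).filter (fun α => ¬ dominatedIn U T i α)

set_option linter.unusedSectionVars false

section aux
variable {N : Type*} [Fintype N] [DecidableEq N] {S : N → Type*}
    [∀ i, Fintype (S i)] [∀ i, DecidableEq (S i)]
    (U : (i : N) → ((j : N) → S j) → ℝ)

lemma prod_update_eval (p : (j : N) → S j → ℝ) (i : N) (f : S i → ℝ)
    (a : (j : N) → S j) :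
    ∏ j, (Function.update p i f) j (a j) = f (a i) * ∏ j ∈ {i}ᶜ, p j (a j) := by
  rw [Fintype.prod_eq_mul_prod_compl i]
  simp only [Function.update_self]
  congr 1
  apply Finset.prod_congr rfl
  intro j hj
  rw [Function.update_of_ne (by simpa using hj)]

lemma payoff_split (p : (j : N) → S j → ℝ) (i : N) (q : S i → ℝ) :
    mixedPayoff U i (Function.update p i q)
      = ∑ β, q β * mixedPayoff U i (Function.update p i (fun γ => if γ = β then 1 else 0)) := by
  unfold mixedPayoff
  simp only [prod_update_eval, Finset.mul_sum]
  rw [Finset.sum_comm]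
  apply Finset.sum_congr rfl
  intro a _
  simp [ite_mul, mul_ite, Finset.sum_ite_eq', mul_assoc]

lemma payoff_pure (i : N) (b : (j : N) → S j) :
    mixedPayoff U i (fun j γ => if γ = b j then (1:ℝ) else 0) = U i b := by
  unfold mixedPayoff
  rw [Finset.sum_eq_single b]
  · simp
  · intro a _ hab
    have : ∃ j, a j ≠ b j := by
      by_contra h; push_neg at h; exact hab (funext h)
    obtain ⟨j, hj⟩ := this
    rw [Finset.prod_eq_zero (Finset.mem_univ j) (by simp [hj]), zero_mul]
  · intro h; exact absurd (Finset.mem_univ b) h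

lemma payoff_delta_update (i : N) (b : (j : N) → S j) (q : S i → ℝ) :
    mixedPayoff U i (Function.update (fun j γ => if γ = b j then (1:ℝ) else 0) i q)
      = ∑ β, q β * U i (Function.update b i β) := by
  rw [payoff_split]
  apply Finset.sum_congr rfl
  intro β _
  congr 1
  have h : Function.update (fun j γ => if γ = b j then (1:ℝ) else 0) i
      (fun γ => if γ = β then (1:ℝ) else 0)
      = fun j γ => if γ = (Function.update b i β) j then (1:ℝ) else 0 := by
    funext j γ
    by_cases hji : j = i
    · subst hji; simp
    · simp [Function.update_of_ne hji]
  rw [h, payoff_pure]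

end aux

/-- If a finite game is dominance-solvable — i.e. a single pure profile
`astar` is what survives iterated elimination of strictly dominated strategies — then
`astar` is the unique strict Nash equilibrium of the game. -/
theorem dominance_solvable_unique_strict_nash {N : Type*} [Fintype N] [DecidableEq N]
    {S : N → Type*} [∀ i, Fintype (S i)] [∀ i, DecidableEq (S i)]
    (U : (i : N) → ((j : N) → S j) → ℝ) (astar : (i : N) → S i)
    (hsolv : ∀ i (β : S i),
      (∀ n : ℕ, β ∈ ((elimStep U)^[n] (fun _ => Finset.univ)) i) ↔ β = astar i) :
    ((∀ i, (∀ α, 0 ≤ (fun β => if β = astar i then (1:ℝ) else 0) α)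
        ∧ ∑ α, (fun β => if β = astar i then (1:ℝ) else 0) α = 1)
      ∧ ∀ i (q : S i → ℝ), (∀ α, 0 ≤ q α) → ∑ α, q α = 1 →
          q ≠ (fun β => if β = astar i then (1:ℝ) else 0) →
          mixedPayoff U i (Function.update
              (fun j β => if β = astar j then (1:ℝ) else 0) i q)
            < mixedPayoff U i (fun j β => if β = astar j then (1:ℝ) else 0))
    ∧ ∀ p : (j : N) → S j → ℝ,
        (∀ i, (∀ α, 0 ≤ p i α) ∧ ∑ α, p i α = 1) →
        (∀ i (q : S i → ℝ), (∀ α, 0 ≤ q α) → ∑ α, q α = 1 → q ≠ p i →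
          mixedPayoff U i (Function.update p i q) < mixedPayoff U i p) →
        p = fun j β => if β = astar j then (1:ℝ) else 0 := by
  classical
  set T : ℕ → (j : N) → Finset (S j) :=
    fun n => (elimStep U)^[n] (fun _ => Finset.univ) with hT
  have hastar : ∀ n i, astar i ∈ T n i := fun n i => ((hsolv i (astar i)).mpr rfl) n
  have hTsucc : ∀ n, T (n+1) = elimStep U (T n) := fun n =>
    Function.iterate_succ_apply' (elimStep U) n _
  -- max strategies survive
  have hv : ∀ i (β : S i),
      (∀ γ, U i (Function.update astar i γ) ≤ U i (Function.update astar i β)) →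
      ∀ n, β ∈ T n i := by
    intro i β hmax n
    induction n with
    | zero => simp [hT]
    | succ n ih =>
      rw [hTsucc]
      unfold elimStep
      rw [Finset.mem_filter]
      refine ⟨ih, ?_⟩
      rintro ⟨q, hq0, hq1, -, hdom⟩
      have h := hdom astar (fun j => hastar n j)
      have hle : ∑ γ, q γ * U i (Function.update astar i γ)
          ≤ ∑ γ, q γ * U i (Function.update astar i β) :=
        Finset.sum_le_sum (fun γ _ => mul_le_mul_of_nonneg_left (hmax γ) (hq0 γ))
      rw [← Finset.sum_mul, hq1, one_mul] at hle
      exact absurd (lt_of_lt_of_le h hle) (lt_irrefl _)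
  have hstrict : ∀ i (β : S i), β ≠ astar i →
      U i (Function.update astar i β) < U i astar := by
    intro i β hne
    obtain ⟨β0, -, hβ0⟩ := Finset.exists_max_image Finset.univ
      (fun γ => U i (Function.update astar i γ)) ⟨astar i, Finset.mem_univ _⟩
    have h0 : β0 = astar i :=
      (hsolv i β0).mp (hv i β0 (fun γ => hβ0 γ (Finset.mem_univ γ)))
    have hmaxval : ∀ γ, U i (Function.update astar i γ) ≤ U i astar := by
      intro γ
      have := hβ0 γ (Finset.mem_univ γ)
      rwa [h0, Function.update_eq_self] at this
    rcases lt_or_eq_of_le (hmaxval β) with h | h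
    · exact h
    · exfalso
      apply hne
      refine (hsolv i β).mp (hv i β ?_)
      intro γ
      rw [h]
      exact hmaxval γ
  refine ⟨⟨fun i => ⟨fun α => by dsimp; split <;> norm_num, by simp⟩, ?_⟩, ?_⟩
  · -- strict Nash
    intro i q hq0 hq1 hqne
    rw [payoff_delta_update, payoff_pure]
    have hex : ∃ β0, β0 ≠ astar i ∧ q β0 ≠ 0 := by
      by_contra h
      push_neg at h
      apply hqne
      funext β
      by_cases hbeq : β = astar i
      · have h1 : ∑ α, q α = q (astar i) :=
          Finset.sum_eq_single (astar i) (fun c _ hc => h c hc)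
            (fun hmem => absurd (Finset.mem_univ _) hmem)
        rw [hbeq]
        simp only [if_pos rfl]
        rw [← hq1]
        exact h1.symm
      · simp [hbeq, h β hbeq]
    obtain ⟨β0, hβ0ne, hβ0⟩ := hex
    have hpos : 0 < q β0 := (hq0 β0).lt_of_ne (Ne.symm hβ0)
    have hlt : ∑ β, q β * U i (Function.update astar i β) < ∑ β, q β * U i astar := by
      apply Finset.sum_lt_sum
      · intro β _
        apply mul_le_mul_of_nonneg_left _ (hq0 β)
        by_cases hb : β = astar i
        · subst hb; rw [Function.update_eq_self]
        · exact le_of_lt (hstrict i β hb)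
      · exact ⟨β0, Finset.mem_univ _,
          mul_lt_mul_of_pos_left (hstrict i β0 hβ0ne) hpos⟩
    calc ∑ β, q β * U i (Function.update astar i β)
        < ∑ β, q β * U i astar := hlt
      _ = U i astar := by rw [← Finset.sum_mul, hq1, one_mul]
  · -- uniqueness
    intro p hp hN
    have hpure : ∀ i, ∃ β, p i = fun γ => if γ = β then (1:ℝ) else 0 := by
      intro i
      set w : S i → ℝ := fun β =>
        mixedPayoff U i (Function.update p i (fun γ => if γ = β then 1 else 0)) with hw
      obtain ⟨β0, -, hβ0⟩ := Finset.exists_max_image Finset.univ w ⟨astar i, Finset.mem_univ _⟩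
      refine ⟨β0, ?_⟩
      by_contra hne
      have h := hN i (fun γ => if γ = β0 then 1 else 0)
        (fun α => by split <;> norm_num) (by simp)
        (fun heq => hne heq.symm)
      have hmp : mixedPayoff U i p = ∑ β, p i β * w β := by
        conv_lhs => rw [← Function.update_eq_self i p]
        rw [payoff_split]
      have hle : ∑ β, p i β * w β ≤ w β0 := by
        calc ∑ β, p i β * w β ≤ ∑ β, p i β * w β0 :=
              Finset.sum_le_sum (fun β _ =>
                mul_le_mul_of_nonneg_left (hβ0 β (Finset.mem_univ β)) ((hp i).1 β))
          _ = w β0 := by rw [← Finset.sum_mul, (hp i).2, one_mul]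
      rw [hmp] at h
      have : w β0 < w β0 := lt_of_lt_of_le h hle
      exact absurd this (lt_irrefl _)
    choose b hb using hpure
    have hpb : p = fun j γ => if γ = b j then (1:ℝ) else 0 := funext hb
    have hpNash : ∀ i (β : S i), β ≠ b i → U i (Function.update b i β) < U i b := by
      intro i β hne
      have hq : (fun γ => if γ = β then (1:ℝ) else 0) ≠ p i := by
        rw [hb i]
        intro heq
        simpa [hne] using congrFun heq β
      have h := hN i (fun γ => if γ = β then 1 else 0)
        (fun α => by split <;> norm_num) (by simp) hq
      rw [hpb, payoff_delta_update, payoff_pure] at h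
      have hsum : ∑ γ, (if γ = β then (1:ℝ) else 0) * U i (Function.update b i γ)
          = U i (Function.update b i β) := by
        simp [ite_mul]
      rwa [hsum] at h
    have hbsurv : ∀ n i, b i ∈ T n i := by
      intro n
      induction n with
      | zero => intro i; simp [hT]
      | succ n ih =>
        intro i
        rw [hTsucc]
        unfold elimStep
        rw [Finset.mem_filter]
        refine ⟨ih i, ?_⟩
        rintro ⟨q, hq0, hq1, -, hdom⟩
        have h := hdom b (fun j => ih j)
        rw [Function.update_eq_self] at h
        have hle : ∑ γ, q γ * U i (Function.update b i γ) ≤ U i b := by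
          calc ∑ γ, q γ * U i (Function.update b i γ) ≤ ∑ γ, q γ * U i b := by
                apply Finset.sum_le_sum
                intro γ _
                apply mul_le_mul_of_nonneg_left _ (hq0 γ)
                by_cases hg : γ = b i
                · subst hg; rw [Function.update_eq_self]
                · exact le_of_lt (hpNash i γ hg)
            _ = U i b := by rw [← Finset.sum_mul, hq1, one_mul]
        exact absurd (lt_of_lt_of_le h hle) (lt_irrefl _)
    have hba : ∀ i, b i = astar i := fun i => (hsolv i (b i)).mp (fun n => hbsurv n i)
    rw [hpb]
    funext j γ
    rw [hba j]
end

section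
/- The drift of the exponential-learning stochastic replicator equation differs from that of the aggregate-shocks replicator equation by x_{iα}(½ η_{iα}² - ½ ∑_β η_{iβ}² x_{iβ}), which equals the drift correction obtained by replacing the payoffs u_{iα} by the modified payoffs ũ_{iα} = u_{iα} + ½ η_{iα}² in the deterministic replicator vector field. -/
/-- The drift of the exponential-learning stochastic replicator equation
differs from the aggregate-shocks drift by `x_α (½η_α² - ½∑_β η_β² x_β)`, which is
exactly the correction obtained by replacing the payoffs `u_α` with the modified
payoffs `ũ_α = u_α + ½η_α²` in the deterministic replicator vector field. -/
theorem drift_difference_modified_game {S : Type*} [Fintype S]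
    (x u η : S → ℝ) (α : S) :
    (x α * ((u α - ∑ β, x β * u β) + (1/2) * (η α) ^ 2 * (1 - 2 * x α)
        - (1/2) * ∑ β, (η β) ^ 2 * x β * (1 - 2 * x β))
      - x α * ((u α - ∑ β, x β * u β)
        - ((η α) ^ 2 * x α - ∑ β, (η β) ^ 2 * (x β) ^ 2))
      = x α * ((1/2) * (η α) ^ 2 - (1/2) * ∑ β, (η β) ^ 2 * x β))
    ∧ (x α * (((u α + (1/2) * (η α) ^ 2)
          - ∑ β, x β * (u β + (1/2) * (η β) ^ 2))
        - (u α - ∑ β, x β * u β))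
      = x α * ((1/2) * (η α) ^ 2 - (1/2) * ∑ β, (η β) ^ 2 * x β)) := by
  constructor
  · have h : ∑ β, (η β) ^ 2 * x β * (1 - 2 * x β)
        = (∑ β, (η β) ^ 2 * x β) - 2 * ∑ β, (η β) ^ 2 * (x β) ^ 2 := by
      rw [Finset.mul_sum, ← Finset.sum_sub_distrib]
      exact Finset.sum_congr rfl (fun β _ => by ring)
    rw [h]; ring
  · have h : ∑ β, x β * (u β + (1/2) * (η β) ^ 2)
        = (∑ β, x β * u β) + (1/2) * ∑ β, (η β) ^ 2 * x β := by
      rw [Finset.mul_sum, ← Finset.sum_add_distrib]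
      exact Finset.sum_congr rfl (fun β _ => by ring)
    rw [h]; ring
end
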